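/- arXiv:2406.01386 — 5 statements merged into one kernel-verified Lean document; each statement's English description precedes it below -/
import Mathlib

section
/- Smoothness of occupancy measures in the transition kernel: for a finite-horizon MDP with fixed policy π and two transition kernels p and p̃, the occupancy measures satisfy q̃(s,a,h) − q(s,a,h) = ∑_{(s',a'),s''} ∑_{i=1}^{h−1} q(s',a',i)·(p̃(s''|s',a',i) − p(s''|s',a',i))·q̃_{(s'',i+1)}(s,a,h), where q̃_{(s'',i+1)}(s,a,h) denotes the occupancy of (s,a,h) under (p̃,π) when starting from state s'' at step i+1. -/
/-- State-occupancy measure: probability of being in state `s` at step `i + n`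
when starting from state `s0` at step `i`, under transition kernel `p` and
policy `π` (steps are 0-indexed). -/
noncomputable def occAux {S A : Type*} [Fintype S] [DecidableEq S]
    (p : S → A → ℕ → S → ℝ) (π : S → ℕ → A) (s0 : S) (i : ℕ) :
    ℕ → S → ℝ
  | 0, s => if s = s0 then 1 else 0
  | n + 1, s =>
      ∑ s' : S, occAux p π s0 i n s' * p s' (π s' (i + n)) (i + n) s

/-- State-action occupancy `q_{(s0,i)}(s,a,h)` (for `h ≥ i`). -/
noncomputable def occSA {S A : Type*} [Fintype S] [DecidableEq S] [DecidableEq A]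
    (p : S → A → ℕ → S → ℝ) (π : S → ℕ → A) (s0 : S) (i : ℕ)
    (h : ℕ) (s : S) (a : A) : ℝ :=
  if π s h = a then occAux p π s0 i (h - i) s else 0

/-!
Let `H i` (`occAux.switch`) be the occupancy of `(s, h)` when the chain moves by `p` before step
`i` and by `p̃` from step `i` on. Then `H 0 = q̃(s, h)` and `H h = q(s, h)`, and `H i - H (i + 1)`
differs only in the kernel used at step `i`: splitting `q̃_{(s',i)}` at its first transition, it is
`∑_{s',s''} q(s', i) (p̃ - p)(s'' | s', π s' i, i) q̃_{(s'',i+1)}(s, h)`.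
Telescoping over `i < h` gives the identity.
-/

open Finset

namespace occAux

variable {S A : Type*} [Fintype S] [DecidableEq S]
  (p ptilde : S → A → ℕ → S → ℝ) (π : S → ℕ → A)

theorem zero_apply (s0 : S) (i : ℕ) (s : S) :
    occAux p π s0 i 0 s = if s = s0 then 1 else 0 := rfl

theorem succ_apply (s0 : S) (i n : ℕ) (s : S) :
    occAux p π s0 i (n + 1) s =
      ∑ s' : S, occAux p π s0 i n s' * p s' (π s' (i + n)) (i + n) s := rfl

theorem succ_apply_eq_sum_first (s0 : S) (i n : ℕ) (s : S) :
    occAux p π s0 i (n + 1) s =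
      ∑ s'' : S, p s0 (π s0 i) i s'' * occAux p π s'' (i + 1) n s := by
  induction n generalizing s with
  | zero => simp [zero_apply, succ_apply]
  | succ n ih =>
    rw [succ_apply]
    simp only [succ_apply p π _ (i + 1), mul_sum, add_right_comm i 1 n, ← add_assoc i n 1]
    rw [sum_comm]
    refine sum_congr rfl fun s' _ => ?_
    rw [ih, sum_mul]
    exact sum_congr rfl fun s'' _ => by ring

noncomputable def switch (s0 : S) (h : ℕ) (s : S) (i : ℕ) : ℝ :=
  ∑ s' : S, occAux p π s0 0 i s' * occAux ptilde π s' i (h - i) s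

theorem switch_zero (s0 : S) (h : ℕ) (s : S) :
    switch p ptilde π s0 h s 0 = occAux ptilde π s0 0 h s := by
  simp [switch, zero_apply]

theorem switch_self (s0 : S) (h : ℕ) (s : S) :
    switch p ptilde π s0 h s h = occAux p π s0 0 h s := by
  simp [switch, zero_apply]

theorem switch_sub_switch_succ (s0 : S) {h i : ℕ} (hi : i < h) (s : S) :
    switch p ptilde π s0 h s i - switch p ptilde π s0 h s (i + 1) =
      ∑ s' : S, ∑ s'' : S, occAux p π s0 0 i s' *
        (ptilde s' (π s' i) i s'' - p s' (π s' i) i s'') *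
          occAux ptilde π s'' (i + 1) (h - (i + 1)) s := by
  have hfirst : ∀ s' : S, occAux ptilde π s' i (h - i) s =
      ∑ s'' : S, ptilde s' (π s' i) i s'' * occAux ptilde π s'' (i + 1) (h - (i + 1)) s := by
    intro s'
    rw [show h - i = h - (i + 1) + 1 by omega, succ_apply_eq_sum_first]
  have hlast : ∀ s'' : S, occAux p π s0 0 (i + 1) s'' =
      ∑ s' : S, occAux p π s0 0 i s' * p s' (π s' i) i s'' := fun s'' => by
    rw [succ_apply, zero_add]
  have hswitch : switch p ptilde π s0 h s i = ∑ s' : S, ∑ s'' : S,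
      occAux p π s0 0 i s' * ptilde s' (π s' i) i s'' * occAux ptilde π s'' (i + 1) (h - (i + 1)) s := by
    simp only [switch, hfirst, mul_sum, mul_assoc]
  have hswitch_succ : switch p ptilde π s0 h s (i + 1) = ∑ s' : S, ∑ s'' : S,
      occAux p π s0 0 i s' * p s' (π s' i) i s'' * occAux ptilde π s'' (i + 1) (h - (i + 1)) s := by
    simp only [switch, hlast, sum_mul]
    exact sum_comm
  rw [hswitch, hswitch_succ, ← sum_sub_distrib]
  refine sum_congr rfl fun s' _ => ?_
  rw [← sum_sub_distrib]
  exact sum_congr rfl fun s'' _ => by ring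

end occAux

theorem sum_occSA_mul {S A : Type*} [Fintype S] [Fintype A] [DecidableEq S] [DecidableEq A]
    (p : S → A → ℕ → S → ℝ) (π : S → ℕ → A) (s0 : S) (j i : ℕ) (s : S) (f : A → ℝ) :
    ∑ a : A, occSA p π s0 j i s a * f a = occAux p π s0 j (i - j) s * f (π s i) := by
  simp [occSA, ite_mul]

theorem occupancy_smoothness_general {S A : Type*} [Fintype S] [Fintype A]
    [DecidableEq S] [DecidableEq A]
    (p ptilde : S → A → ℕ → S → ℝ) (π : S → ℕ → A) (s₁ : S)
    (h : ℕ) (s : S) (a : A) :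
    occSA ptilde π s₁ 0 h s a - occSA p π s₁ 0 h s a =
      ∑ s' : S, ∑ a' : A, ∑ s'' : S, ∑ i ∈ Finset.range h,
        occSA p π s₁ 0 i s' a' *
          (ptilde s' a' i s'' - p s' a' i s'') *
            occSA ptilde π s'' (i + 1) h s a := by
  by_cases hsa : π s h = a
  · have hocc : ∀ (p' : S → A → ℕ → S → ℝ) s0 i,
        occSA p' π s0 i h s a = occAux p' π s0 i (h - i) s := fun _ _ _ => if_pos hsa
    have htelescope := sum_range_sub' (occAux.switch p ptilde π s₁ h s) h
    rw [occAux.switch_zero, occAux.switch_self] at htelescope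
    simp only [hocc, Nat.sub_zero, ← htelescope]
    rw [sum_congr rfl fun i hi => occAux.switch_sub_switch_succ p ptilde π s₁ (mem_range.1 hi) s]
    rw [sum_comm]
    refine sum_congr rfl fun s' _ => ?_
    rw [sum_comm]
    conv_rhs => rw [sum_comm]
    refine sum_congr rfl fun s'' _ => ?_
    conv_rhs => rw [sum_comm]
    refine sum_congr rfl fun i _ => ?_
    simp only [mul_assoc, sum_occSA_mul, Nat.sub_zero]
  · simp [occSA, hsa]

/-- Smoothness of occupancy measures in the transition kernel:
`q̃(s,a,h) − q(s,a,h) = ∑_{(s',a'),s''} ∑_{i<h} q(s',a',i)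
  (p̃(s''|s',a',i) − p(s''|s',a',i)) q̃_{(s'',i+1)}(s,a,h)`. -/
theorem occupancy_smoothness {S A : Type*} [Fintype S] [Fintype A]
    [DecidableEq S] [DecidableEq A]
    (p ptilde : S → A → ℕ → S → ℝ) (π : S → ℕ → A) (s₁ : S)
    (hp0 : ∀ s a h s', 0 ≤ p s a h s')
    (hp1 : ∀ s a h, ∑ s' : S, p s a h s' = 1)
    (hpt0 : ∀ s a h s', 0 ≤ ptilde s a h s')
    (hpt1 : ∀ s a h, ∑ s' : S, ptilde s a h s' = 1)
    (h : ℕ) (s : S) (a : A) :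
    occSA ptilde π s₁ 0 h s a - occSA p π s₁ 0 h s a =
      ∑ s' : S, ∑ a' : A, ∑ s'' : S, ∑ i ∈ Finset.range h,
        occSA p π s₁ 0 i s' a' *
          (ptilde s' a' i s'' - p s' a' i s'') *
            occSA ptilde π s'' (i + 1) h s a :=
  occupancy_smoothness_general p ptilde π s₁ h s a
end

section
/- Value function smoothness for episodic MDPs: for a finite-horizon MDP with fixed policy π and two transition kernels p and p̃, |V₁^{p̃,π}(s₁) − V₁^{p,π}(s₁)| ≤ ∑_{s,a,h} q_{s,a,h}^{p,π} · |(p̃(·|s,a,h) − p(·|s,a,h))ᵀ V_{h+1}^{p̃,π}| ≤ H · ∑_{s,a,h} q_{s,a,h}^{p,π} · ‖p̃(·|s,a,h) − p(·|s,a,h)‖₁. -/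
/-- Value function with `n` remaining steps, current step `h` (0-indexed). -/
noncomputable def valAux {S A : Type*} [Fintype S]
    (p : S → A → ℕ → S → ℝ) (r : S → A → ℕ → ℝ) (π : S → ℕ → A) :
    ℕ → ℕ → S → ℝ
  | 0, _, _ => 0
  | n + 1, h, s =>
      r s (π s h) h + ∑ s' : S, p s (π s h) h s' * valAux p r π n (h + 1) s'

/-- `V_h^{p,π}(s)` in an episodic MDP with horizon `H` (steps `0,…,H-1`). -/
noncomputable def val {S A : Type*} [Fintype S]
    (p : S → A → ℕ → S → ℝ) (r : S → A → ℕ → ℝ) (π : S → ℕ → A)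
    (H h : ℕ) (s : S) : ℝ :=
  valAux p r π (H - h) h s

set_option linter.unusedSectionVars false

section aux
variable {S A : Type*} [Fintype S] [DecidableEq S]
  (p pt : S → A → ℕ → S → ℝ) (r : S → A → ℕ → ℝ) (π : S → ℕ → A)

lemma valAux_nonneg (hp0 : ∀ s a h s', 0 ≤ p s a h s')
    (hr : ∀ s a h, r s a h ∈ Set.Icc (0:ℝ) 1) :
    ∀ n h s, 0 ≤ valAux p r π n h s := by
  intro n
  induction n with
  | zero => intro h s; simp [valAux]
  | succ n ih =>
      intro h s
      exact add_nonneg (hr s (π s h) h).1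
        (Finset.sum_nonneg fun s' _ => mul_nonneg (hp0 _ _ _ _) (ih _ _))

lemma valAux_le (hp0 : ∀ s a h s', 0 ≤ p s a h s')
    (hp1 : ∀ s a h, ∑ s' : S, p s a h s' = 1)
    (hr : ∀ s a h, r s a h ∈ Set.Icc (0:ℝ) 1) :
    ∀ n h s, valAux p r π n h s ≤ (n : ℝ) := by
  intro n
  induction n with
  | zero => intro h s; simp [valAux]
  | succ n ih =>
      intro h s
      have h1 : (∑ s' : S, p s (π s h) h s' * valAux p r π n (h+1) s') ≤
          ∑ s' : S, p s (π s h) h s' * (n : ℝ) :=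
        Finset.sum_le_sum fun s' _ =>
          mul_le_mul_of_nonneg_left (ih _ _) (hp0 _ _ _ _)
      have h2 : (∑ s' : S, p s (π s h) h s' * (n : ℝ)) = (n : ℝ) := by
        rw [← Finset.sum_mul, hp1, one_mul]
      calc valAux p r π (n+1) h s ≤ 1 + (n:ℝ) := by
            simpa [valAux] using add_le_add (hr s (π s h) h).2 (h1.trans h2.le)
        _ = ((n+1 : ℕ) : ℝ) := by push_cast; ring

lemma occAux_nonneg (hp0 : ∀ s a h s', 0 ≤ p s a h s') (s0 : S) (i : ℕ) :
    ∀ n s, 0 ≤ occAux p π s0 i n s := by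
  intro n
  induction n with
  | zero => intro s; simp only [occAux]; positivity
  | succ n ih =>
      intro s
      exact Finset.sum_nonneg fun s' _ => mul_nonneg (ih _) (hp0 _ _ _ _)

lemma occ_first_step :
    ∀ (k : ℕ) (i : ℕ) (s0 s : S),
      occAux p π s0 i (k+1) s =
        ∑ s' : S, p s0 (π s0 i) i s' * occAux p π s' (i+1) k s := by
  intro k
  induction k with
  | zero =>
      intro i s0 s
      simp [occAux, ite_mul, mul_ite]
  | succ k ih =>
      intro i s0 s
      calc occAux p π s0 i (k+2) s
          = ∑ s'' : S, occAux p π s0 i (k+1) s'' *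
              p s'' (π s'' (i+(k+1))) (i+(k+1)) s := rfl
        _ = ∑ s'' : S, (∑ s' : S, p s0 (π s0 i) i s' * occAux p π s' (i+1) k s'') *
              p s'' (π s'' (i+(k+1))) (i+(k+1)) s := by
            exact Finset.sum_congr rfl fun s'' _ => by rw [ih]
        _ = ∑ s' : S, p s0 (π s0 i) i s' *
              ∑ s'' : S, occAux p π s' (i+1) k s'' *
                p s'' (π s'' ((i+1)+k)) ((i+1)+k) s := by
            simp only [Finset.sum_mul, Finset.mul_sum]
            rw [Finset.sum_comm]
            refine Finset.sum_congr rfl fun s' _ => Finset.sum_congr rfl fun s'' _ => ?_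
            have hik : i + (k+1) = (i+1) + k := by omega
            rw [hik]; ring
        _ = ∑ s' : S, p s0 (π s0 i) i s' * occAux p π s' (i+1) (k+1) s := rfl

lemma swap_occ (k i : ℕ) (s0 : S) (D : S → ℝ) :
    ∑ s : S, occAux p π s0 i (k+1) s * D s =
      ∑ s'' : S, p s0 (π s0 i) i s'' * ∑ s : S, occAux p π s'' (i+1) k s * D s := by
  simp only [occ_first_step p π, Finset.sum_mul]
  rw [Finset.sum_comm]
  refine Finset.sum_congr rfl fun s'' _ => ?_
  rw [Finset.mul_sum]
  exact Finset.sum_congr rfl fun s _ => by ring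

lemma telescope :
    ∀ (n i : ℕ) (s0 : S),
      valAux pt r π n i s0 - valAux p r π n i s0 =
        ∑ k ∈ Finset.range n, ∑ s : S, occAux p π s0 i k s *
          ∑ s' : S, (pt s (π s (i+k)) (i+k) s' - p s (π s (i+k)) (i+k) s') *
            valAux pt r π (n - k - 1) (i + k + 1) s' := by
  intro n
  induction n with
  | zero => intro i s0; simp [valAux]
  | succ n ih =>
      intro i s0
      rw [Finset.sum_range_succ']
      have h0 : (∑ s : S, occAux p π s0 i 0 s *
          ∑ s' : S, (pt s (π s (i+0)) (i+0) s' - p s (π s (i+0)) (i+0) s') *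
            valAux pt r π (n + 1 - 0 - 1) (i + 0 + 1) s') =
          ∑ s' : S, (pt s0 (π s0 i) i s' - p s0 (π s0 i) i s') *
            valAux pt r π n (i + 1) s' := by
        simp [occAux, ite_mul]
      rw [h0]
      have hterm : ∀ k ∈ Finset.range n, (∑ s : S, occAux p π s0 i (k+1) s *
          ∑ s' : S, (pt s (π s (i+(k+1))) (i+(k+1)) s' - p s (π s (i+(k+1))) (i+(k+1)) s') *
            valAux pt r π (n + 1 - (k+1) - 1) (i + (k+1) + 1) s') =
          ∑ s'' : S, p s0 (π s0 i) i s'' *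
            (∑ s : S, occAux p π s'' (i+1) k s *
              ∑ s' : S, (pt s (π s ((i+1)+k)) ((i+1)+k) s' - p s (π s ((i+1)+k)) ((i+1)+k) s') *
                valAux pt r π (n - k - 1) ((i+1) + k + 1) s') := by
        intro k _
        have hik : i + (k+1) = (i+1) + k := by omega
        have hik2 : i + (k+1) + 1 = (i+1) + k + 1 := by omega
        have hnk : n + 1 - (k+1) - 1 = n - k - 1 := by omega
        simp only [hik, hik2, hnk]
        exact swap_occ p π k i s0 _
      rw [Finset.sum_congr rfl hterm]
      have key : (∑ k ∈ Finset.range n, ∑ s'' : S, p s0 (π s0 i) i s'' *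
            (∑ s : S, occAux p π s'' (i+1) k s *
              ∑ s' : S, (pt s (π s ((i+1)+k)) ((i+1)+k) s' - p s (π s ((i+1)+k)) ((i+1)+k) s') *
                valAux pt r π (n - k - 1) ((i+1) + k + 1) s')) =
          ∑ s'' : S, p s0 (π s0 i) i s'' *
            (valAux pt r π n (i+1) s'' - valAux p r π n (i+1) s'') := by
        rw [Finset.sum_comm]
        refine Finset.sum_congr rfl fun s'' _ => ?_
        rw [← Finset.mul_sum, ← ih]
      rw [key]
      show (r s0 (π s0 i) i + ∑ s' : S, pt s0 (π s0 i) i s' * valAux pt r π n (i+1) s')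
          - (r s0 (π s0 i) i + ∑ s' : S, p s0 (π s0 i) i s' * valAux p r π n (i+1) s')
          = _
      simp only [sub_mul, mul_sub, Finset.sum_sub_distrib]
      ring
end aux

/-- Value function smoothness for episodic MDPs:
`|V₁^{p̃,π}(s₁) − V₁^{p,π}(s₁)|
  ≤ ∑_{s,a,h} q_{s,a,h}^{p,π} |(p̃(·|s,a,h) − p(·|s,a,h))ᵀ V_{h+1}^{p̃,π}|
  ≤ H ∑_{s,a,h} q_{s,a,h}^{p,π} ‖p̃(·|s,a,h) − p(·|s,a,h)‖₁`. -/
theorem value_smoothness {S A : Type*} [Fintype S] [Fintype A]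
    [DecidableEq S] [DecidableEq A]
    (H : ℕ) (p ptilde : S → A → ℕ → S → ℝ) (r : S → A → ℕ → ℝ)
    (π : S → ℕ → A) (s₁ : S)
    (hp0 : ∀ s a h s', 0 ≤ p s a h s')
    (hp1 : ∀ s a h, ∑ s' : S, p s a h s' = 1)
    (hpt0 : ∀ s a h s', 0 ≤ ptilde s a h s')
    (hpt1 : ∀ s a h, ∑ s' : S, ptilde s a h s' = 1)
    (hr : ∀ s a h, r s a h ∈ Set.Icc (0:ℝ) 1) :
    |val ptilde r π H 0 s₁ - val p r π H 0 s₁| ≤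
      (∑ h ∈ Finset.range H, ∑ s : S, ∑ a : A,
        (if π s h = a then occAux p π s₁ 0 h s else 0) *
          |∑ s' : S, (ptilde s a h s' - p s a h s') * val ptilde r π H (h + 1) s'|) ∧
    (∑ h ∈ Finset.range H, ∑ s : S, ∑ a : A,
        (if π s h = a then occAux p π s₁ 0 h s else 0) *
          |∑ s' : S, (ptilde s a h s' - p s a h s') * val ptilde r π H (h + 1) s'|) ≤
      (H : ℝ) * ∑ h ∈ Finset.range H, ∑ s : S, ∑ a : A,
        (if π s h = a then occAux p π s₁ 0 h s else 0) *
          (∑ s' : S, |ptilde s a h s' - p s a h s'|) := by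
  have collapse : ∀ (h : ℕ) (f : S → A → ℝ),
      (∑ s : S, ∑ a : A, (if π s h = a then occAux p π s₁ 0 h s else 0) * f s a)
        = ∑ s : S, occAux p π s₁ 0 h s * f s (π s h) := by
    intro h f
    refine Finset.sum_congr rfl fun s _ => ?_
    simp [ite_mul]
  constructor
  · -- first inequality
    have ht := telescope p ptilde r π H 0 s₁
    simp only [val, Nat.sub_zero, zero_add] at ht ⊢
    rw [Finset.sum_congr rfl (fun h _ => collapse h _), ht]
    calc |∑ k ∈ Finset.range H, ∑ s : S, occAux p π s₁ 0 k s *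
            ∑ s' : S, (ptilde s (π s k) k s' - p s (π s k) k s') *
              valAux ptilde r π (H - k - 1) (k + 1) s'|
        ≤ ∑ k ∈ Finset.range H, |∑ s : S, occAux p π s₁ 0 k s *
            ∑ s' : S, (ptilde s (π s k) k s' - p s (π s k) k s') *
              valAux ptilde r π (H - k - 1) (k + 1) s'| :=
          Finset.abs_sum_le_sum_abs _ _
      _ ≤ ∑ k ∈ Finset.range H, ∑ s : S, |occAux p π s₁ 0 k s *
            ∑ s' : S, (ptilde s (π s k) k s' - p s (π s k) k s') *
              valAux ptilde r π (H - k - 1) (k + 1) s'| :=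
          Finset.sum_le_sum fun k _ => Finset.abs_sum_le_sum_abs _ _
      _ = ∑ k ∈ Finset.range H, ∑ s : S, occAux p π s₁ 0 k s *
            |∑ s' : S, (ptilde s (π s k) k s' - p s (π s k) k s') *
              valAux ptilde r π (H - k - 1) (k + 1) s'| := by
          refine Finset.sum_congr rfl fun k _ => Finset.sum_congr rfl fun s _ => ?_
          rw [abs_mul, abs_of_nonneg (occAux_nonneg p π hp0 s₁ 0 k s)]
      _ = ∑ k ∈ Finset.range H, ∑ s : S, occAux p π s₁ 0 k s *
            |∑ s' : S, (ptilde s (π s k) k s' - p s (π s k) k s') *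
              valAux ptilde r π (H - (k + 1)) (k + 1) s'| := by
          simp only [Nat.sub_sub]
  · -- second inequality
    rw [Finset.mul_sum]
    refine Finset.sum_le_sum fun h _ => ?_
    rw [Finset.mul_sum]
    refine Finset.sum_le_sum fun s _ => ?_
    rw [Finset.mul_sum]
    refine Finset.sum_le_sum fun a _ => ?_
    have hQ : (0:ℝ) ≤ (if π s h = a then occAux p π s₁ 0 h s else 0) := by
      split
      · exact occAux_nonneg p π hp0 s₁ 0 h s
      · exact le_refl 0
    have hV : ∀ s' : S, |val ptilde r π H (h+1) s'| ≤ (H:ℝ) := by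
      intro s'
      rw [val, abs_of_nonneg (valAux_nonneg ptilde r π hpt0 hr _ _ _)]
      exact le_trans (valAux_le ptilde r π hpt0 hpt1 hr _ _ _)
        (Nat.cast_le.mpr (Nat.sub_le H (h+1)))
    have hD : |∑ s' : S, (ptilde s a h s' - p s a h s') * val ptilde r π H (h+1) s'|
        ≤ (H:ℝ) * ∑ s' : S, |ptilde s a h s' - p s a h s'| := by
      calc |∑ s' : S, (ptilde s a h s' - p s a h s') * val ptilde r π H (h+1) s'|
          ≤ ∑ s' : S, |(ptilde s a h s' - p s a h s') * val ptilde r π H (h+1) s'| :=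
            Finset.abs_sum_le_sum_abs _ _
        _ = ∑ s' : S, |ptilde s a h s' - p s a h s'| * |val ptilde r π H (h+1) s'| := by
            simp [abs_mul]
        _ ≤ ∑ s' : S, |ptilde s a h s' - p s a h s'| * (H:ℝ) :=
            Finset.sum_le_sum fun s' _ =>
              mul_le_mul_of_nonneg_left (hV s') (abs_nonneg _)
        _ = (H:ℝ) * ∑ s' : S, |ptilde s a h s' - p s a h s'| := by
            rw [← Finset.sum_mul, mul_comm]
    calc (if π s h = a then occAux p π s₁ 0 h s else 0) *
          |∑ s' : S, (ptilde s a h s' - p s a h s') * val ptilde r π H (h+1) s'|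
        ≤ (if π s h = a then occAux p π s₁ 0 h s else 0) *
          ((H:ℝ) * ∑ s' : S, |ptilde s a h s' - p s a h s'|) :=
          mul_le_mul_of_nonneg_left hD hQ
      _ = (H:ℝ) * ((if π s h = a then occAux p π s₁ 0 h s else 0) *
          ∑ s' : S, |ptilde s a h s' - p s a h s'|) := by ring
end

section
/- Counter summation bound: let L₁ ≤ L₂ be positive reals and c > 0, Δ > 0 with L₁ = c²/Δ² and L₂ = 2c²K/Δ² for some K ≥ 1. Define κ(ℓ) = 2√(c²/ℓ) for 1 ≤ ℓ ≤ L₁, κ(ℓ) = 2c²/(Δ·ℓ) for L₁ < ℓ ≤ L₂, and κ(ℓ) = 0 for ℓ > L₂. Then for any positive integer N, ∑_{s=1}^{N} κ(s) ≤ (2c²/Δ)·(3 + log K). -/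
/-!
Write `a = c / Δ`, so that `L₁ = a²`, `L₂ = 2 K a²` and `κ = 2c · r` with `r(x) = x^{-1/2}` on
`(0, a²]`, `r(x) = a / x` on `(a², L₂]` and `r = 0` beyond. The potential
`Φ(x) = 2 √(min x a²) + a log (max a² (min x L₂))` is a (capped) antiderivative of `r`; as `Φ` is
concave on `[0, L₂]`, the chord estimate `r(s) ≤ Φ(s) - Φ(s - 1)` holds for every `s ≥ 1`. The sum
therefore telescopes to at most `Φ(∞) - Φ(0) = 2a + a log (2K) ≤ a (3 + log K)`.
-/

open Real Finset

namespace CounterSummation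

noncomputable def rate (a L x : ℝ) : ℝ :=
  if x ≤ a ^ 2 then (√x)⁻¹ else if x ≤ L then a / x else 0

noncomputable def potential (a L x : ℝ) : ℝ :=
  2 * √(min x (a ^ 2)) + a * log (max (a ^ 2) (min x L))

lemma sub_div_two_sqrt_le_sqrt_sub_sqrt {x y : ℝ} (hy : 0 ≤ y) (hyx : y ≤ x) :
    (x - y) / (2 * √x) ≤ √x - √y := by
  rcases hyx.eq_or_lt with rfl | hlt
  · simp
  have hx : 0 < √x := sqrt_pos.2 (hy.trans_lt hlt)
  rw [div_le_iff₀ (by positivity)]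
  nlinarith [sq_sqrt hy, sq_sqrt (hy.trans hyx), sqrt_nonneg y, sqrt_le_sqrt hyx]

lemma sub_div_le_log_sub_log {x y : ℝ} (hy : 0 < y) (hyx : y ≤ x) :
    (x - y) / x ≤ log x - log y := by
  have hx := hy.trans_le hyx
  have := one_sub_inv_le_log_of_pos (div_pos hx hy)
  rwa [log_div hx.ne' hy.ne', inv_div, ← div_self hx.ne', ← sub_div] at this

lemma sum_Icc_le_sub_of_le_sub {f g : ℕ → ℝ} (h : ∀ n, f (n + 1) ≤ g (n + 1) - g n) (N : ℕ) :
    ∑ s ∈ Icc 1 N, f s ≤ g N - g 0 := by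
  induction N with
  | zero => simp
  | succ N ih =>
    rw [sum_Icc_succ_top (by omega)]
    linarith [h N]

variable {a L : ℝ}

lemma monotone_potential (ha : 0 < a) : Monotone (potential a L) := by
  intro x y hxy
  have hpos : 0 < max (a ^ 2) (min x L) := lt_max_of_lt_left (by positivity)
  unfold potential
  gcongr

lemma potential_zero (ha : 0 < a) : potential a L 0 = a * log (a ^ 2) := by
  have hmin : min 0 L ≤ a ^ 2 := (min_le_left 0 L).trans (by positivity)
  rw [potential, min_eq_left (by positivity), max_eq_left hmin, sqrt_zero, mul_zero, zero_add]

lemma potential_le (ha : 0 < a) (haL : a ^ 2 ≤ L) (x : ℝ) :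
    potential a L x ≤ 2 * a + a * log L := by
  have hsqrt : √(min x (a ^ 2)) ≤ a :=
    (sqrt_le_sqrt (min_le_right x (a ^ 2))).trans_eq (sqrt_sq ha.le)
  have hlog : log (max (a ^ 2) (min x L)) ≤ log L :=
    log_le_log (lt_max_of_lt_left (by positivity)) (max_le haL (min_le_right x L))
  unfold potential
  gcongr

lemma potential_of_le_sq {y : ℝ} (hy : y ≤ a ^ 2) :
    potential a L y = 2 * √y + a * log (a ^ 2) := by
  rw [potential, min_eq_left hy, max_eq_left ((min_le_left y L).trans hy)]

lemma potential_of_sq_le_of_le (ha : 0 < a) {y : ℝ} (hay : a ^ 2 ≤ y) (hyL : y ≤ L) :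
    potential a L y = 2 * a + a * log y := by
  rw [potential, min_eq_right hay, sqrt_sq ha.le, min_eq_left hyL, max_eq_right hay]

lemma rate_le_potential_sub (ha : 0 < a) {x : ℝ} (hx : 1 ≤ x) :
    rate a L x ≤ potential a L x - potential a L (x - 1) := by
  unfold rate
  split_ifs with hxa hxL
  · have hsqrt :=
      sub_div_two_sqrt_le_sqrt_sub_sqrt (by linarith : 0 ≤ x - 1) (sub_le_self x one_pos.le)
    rw [sub_sub_cancel, one_div, mul_inv] at hsqrt
    rw [potential_of_le_sq hxa, potential_of_le_sq (by linarith)]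
    linarith
  · rw [not_le] at hxa
    have hx0 : 0 < x := by linarith
    rw [potential_of_sq_le_of_le ha hxa.le hxL]
    rcases le_or_gt (x - 1) (a ^ 2) with hx1 | hx1
    · -- the kink `a ^ 2` of the potential lies in `[x - 1, x]`
      have hsqrt := sub_div_two_sqrt_le_sqrt_sub_sqrt (by linarith : 0 ≤ x - 1) hx1
      rw [sqrt_sq ha.le] at hsqrt
      have hlog := mul_le_mul_of_nonneg_left (sub_div_le_log_sub_log (by positivity) hxa.le) ha.le
      have hslope : a * (a ^ 2 - (x - 1)) / x ≤ 2 * ((a ^ 2 - (x - 1)) / (2 * a)) := by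
        rw [div_le_iff₀ hx0]
        field_simp
        nlinarith
      have hsplit : a / x = a * (a ^ 2 - (x - 1)) / x + a * ((x - a ^ 2) / x) := by
        field_simp
        ring
      rw [potential_of_le_sq hx1]
      linarith
    · have hlog := sub_div_le_log_sub_log ((pow_pos ha 2).trans hx1) (sub_le_self x one_pos.le)
      rw [sub_sub_cancel] at hlog
      rw [potential_of_sq_le_of_le ha hx1.le (by linarith), ← mul_one_div]
      nlinarith
  · exact sub_nonneg.2 (monotone_potential ha (sub_le_self x one_pos.le))

lemma sum_rate_le (ha : 0 < a) (haL : a ^ 2 ≤ L) (N : ℕ) :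
    ∑ s ∈ Icc 1 N, rate a L s ≤ a * (2 + log (L / a ^ 2)) := by
  have hstep (n : ℕ) : rate a L ((n + 1 : ℕ) : ℝ) ≤
      potential a L ((n + 1 : ℕ) : ℝ) - potential a L (n : ℝ) := by
    simpa using rate_le_potential_sub ha (x := (n : ℝ) + 1) (by simp)
  calc ∑ s ∈ Icc 1 N, rate a L s ≤ potential a L N - potential a L (0 : ℕ) :=
        sum_Icc_le_sub_of_le_sub (f := fun s ↦ rate a L s) (g := fun n ↦ potential a L n)
          hstep N
    _ ≤ 2 * a + a * log L - a * log (a ^ 2) := by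
        rw [Nat.cast_zero, potential_zero ha]
        linarith [potential_le ha haL (N : ℝ)]
    _ = a * (2 + log (L / a ^ 2)) := by
        rw [log_div ((pow_pos ha 2).trans_le haL).ne' (by positivity)]
        ring

end CounterSummation

theorem counter_summation_bound_general (c Δ K L₁ L₂ : ℝ)
    (hc : 0 < c) (hΔ : 0 < Δ) (hK : 1 ≤ K)
    (hL1 : L₁ = c ^ 2 / Δ ^ 2) (hL2 : L₂ = 2 * c ^ 2 * K / Δ ^ 2)
    (κ : ℕ → ℝ)
    (hκ : ∀ ℓ : ℕ, 1 ≤ ℓ →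
      κ ℓ = if (ℓ : ℝ) ≤ L₁ then 2 * Real.sqrt (c ^ 2 / (ℓ : ℝ))
            else if (ℓ : ℝ) ≤ L₂ then 2 * c ^ 2 / (Δ * (ℓ : ℝ))
            else 0)
    (N : ℕ) :
    ∑ s ∈ Finset.Icc 1 N, κ s ≤ (2 * c ^ 2 / Δ) * (3 + Real.log K) := by
  set a := c / Δ with ha_def
  have ha : 0 < a := div_pos hc hΔ
  have hL₁ : L₁ = a ^ 2 := by rw [hL1, div_pow]
  have hL₂ : L₂ = 2 * K * a ^ 2 := by rw [hL2, div_pow]; ring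
  have hκ_eq : ∀ s ∈ Icc 1 N, κ s = 2 * c * CounterSummation.rate a L₂ s := by
    intro s hs
    rw [hκ s (mem_Icc.1 hs).1, CounterSummation.rate, hL₁]
    split_ifs
    · rw [sqrt_div (sq_nonneg c), sqrt_sq hc.le]; ring
    · rw [ha_def]; field_simp
    · ring
  have hlog : log (L₂ / a ^ 2) ≤ 1 + log K := by
    rw [hL₂, mul_div_cancel_right₀ _ (by positivity), log_mul two_ne_zero (by positivity)]
    linarith [log_le_sub_one_of_pos two_pos]
  calc ∑ s ∈ Icc 1 N, κ s = 2 * c * ∑ s ∈ Icc 1 N, CounterSummation.rate a L₂ s := by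
        rw [sum_congr rfl hκ_eq, mul_sum]
    _ ≤ 2 * c * (a * (2 + log (L₂ / a ^ 2))) := by
        gcongr
        exact CounterSummation.sum_rate_le ha (by rw [hL₂]; nlinarith [sq_nonneg a]) N
    _ ≤ 2 * c * (a * (3 + log K)) := by gcongr 2 * c * (a * ?_); linarith
    _ = 2 * c ^ 2 / Δ * (3 + log K) := by rw [ha_def]; ring

theorem counter_summation_bound (c Δ K L₁ L₂ : ℝ)
    (hc : 0 < c) (hΔ : 0 < Δ) (hK : 1 ≤ K)
    (hL1 : L₁ = c ^ 2 / Δ ^ 2) (hL2 : L₂ = 2 * c ^ 2 * K / Δ ^ 2)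
    (κ : ℕ → ℝ)
    (hκ : ∀ ℓ : ℕ, 1 ≤ ℓ →
      κ ℓ = if (ℓ : ℝ) ≤ L₁ then 2 * Real.sqrt (c ^ 2 / (ℓ : ℝ))
            else if (ℓ : ℝ) ≤ L₂ then 2 * c ^ 2 / (Δ * (ℓ : ℝ))
            else 0)
    (N : ℕ) (hN : 0 < N) :
    ∑ s ∈ Finset.Icc 1 N, κ s ≤ (2 * c ^ 2 / Δ) * (3 + Real.log K) :=
  counter_summation_bound_general c Δ K L₁ L₂ hc hΔ hK hL1 hL2 κ hκ N
end

section
/- Monotonicity of optimistic value iteration: in the extended value iteration oracle, if the true transition kernel p satisfies ‖p(·|s,a,h) − p̂(·|s,a,h)‖₁ ≤ φ(s,a,h) for all (s,a,h), then the computed optimistic values satisfy V̄_h(s) ≥ V_h^{p,π}(s) for every policy π, state s, and step h, where V̄ is obtained by backward recursion V̄_h(s) = max_a [r(s,a,h) + max_{p'∈Δ_S: ‖p'−p̂(·|s,a,h)‖₁≤φ(s,a,h)} p'ᵀ V̄_{h+1}] with V̄_{H+1} = 0. -/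
/-- Extended value iteration: optimistic value with `n` remaining steps at step
`h`, maximizing over actions and over transition vectors `p'` in the simplex
within ℓ¹-distance `φ(s,a,h)` of the empirical kernel `p̂`. -/
noncomputable def optValAux {S A : Type*} [Fintype S]
    (r : S → A → ℕ → ℝ) (phat : S → A → ℕ → S → ℝ) (φ : S → A → ℕ → ℝ) :
    ℕ → ℕ → S → ℝ
  | 0, _, _ => 0
  | n + 1, h, s =>
      ⨆ a : A, sSup {x : ℝ | ∃ p' : S → ℝ,
        (∀ s', 0 ≤ p' s') ∧ (∑ s' : S, p' s') = 1 ∧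
        (∑ s' : S, |p' s' - phat s a h s'|) ≤ φ s a h ∧
        x = r s a h + ∑ s' : S, p' s' * optValAux r phat φ n (h + 1) s'}

/-- Monotonicity (optimism) of extended value iteration: if the true kernel `p`
lies in the ℓ¹ confidence region around `p̂`, then the optimistic values
dominate the value of every policy under `p`, at every state and step. -/
theorem extended_value_iteration_optimism {S A : Type*} [Fintype S] [Fintype A]
    [Nonempty A]
    (H : ℕ) (p phat : S → A → ℕ → S → ℝ) (r : S → A → ℕ → ℝ)
    (φ : S → A → ℕ → ℝ)
    (hp0 : ∀ s a h s', 0 ≤ p s a h s')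
    (hp1 : ∀ s a h, ∑ s' : S, p s a h s' = 1)
    (hphat0 : ∀ s a h s', 0 ≤ phat s a h s')
    (hphat1 : ∀ s a h, ∑ s' : S, phat s a h s' = 1)
    (hr : ∀ s a h, r s a h ∈ Set.Icc (0:ℝ) 1)
    (hφ : ∀ s a h, 0 ≤ φ s a h)
    (hclose : ∀ s a h, (∑ s' : S, |p s a h s' - phat s a h s'|) ≤ φ s a h) :
    ∀ (π : S → ℕ → A) (h : ℕ) (s : S),
      valAux p r π (H - h) h s ≤ optValAux r phat φ (H - h) h s := by
  intro π
  suffices key : ∀ (n hh : ℕ) (s : S),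
      valAux p r π n hh s ≤ optValAux r phat φ n hh s by
    intro hh s; exact key _ _ _
  intro n
  induction n with
  | zero => intro hh s; simp [valAux, optValAux]
  | succ n ih =>
    intro hh s
    rw [valAux, optValAux]
    set V : S → ℝ := optValAux r phat φ n (hh + 1) with hV
    set B : ℝ := 1 + ∑ s' : S, |V s'| with hBdef
    have hB0 : 0 ≤ B := by
      have : 0 ≤ ∑ s' : S, |V s'| :=
        Finset.sum_nonneg fun i _ => abs_nonneg _
      linarith
    have hmem_le : ∀ (a : A) (x : ℝ),
        x ∈ {x : ℝ | ∃ p' : S → ℝ, (∀ s', 0 ≤ p' s') ∧ (∑ s' : S, p' s') = 1 ∧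
          (∑ s' : S, |p' s' - phat s a hh s'|) ≤ φ s a hh ∧
          x = r s a hh + ∑ s' : S, p' s' * V s'} → x ≤ B := by
      rintro a x ⟨p', hp'0, hp'1, -, rfl⟩
      have hple : ∀ s', p' s' ≤ 1 := by
        intro s'
        calc p' s' ≤ ∑ t : S, p' t :=
              Finset.single_le_sum (fun t _ => hp'0 t) (Finset.mem_univ s')
          _ = 1 := hp'1
      have hsum : ∑ s' : S, p' s' * V s' ≤ ∑ s' : S, |V s'| := by
        apply Finset.sum_le_sum
        intro i _
        calc p' i * V i ≤ p' i * |V i| :=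
              mul_le_mul_of_nonneg_left (le_abs_self _) (hp'0 i)
          _ ≤ 1 * |V i| := mul_le_mul_of_nonneg_right (hple i) (abs_nonneg _)
          _ = |V i| := one_mul _
      have hr1 := (hr s a hh).2
      rw [hBdef]; linarith
    have hSup_le : ∀ a : A,
        sSup {x : ℝ | ∃ p' : S → ℝ, (∀ s', 0 ≤ p' s') ∧ (∑ s' : S, p' s') = 1 ∧
          (∑ s' : S, |p' s' - phat s a hh s'|) ≤ φ s a hh ∧
          x = r s a hh + ∑ s' : S, p' s' * V s'} ≤ B := fun a =>
      Real.sSup_le (hmem_le a) hB0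
    have hbdd : BddAbove (Set.range fun a : A =>
        sSup {x : ℝ | ∃ p' : S → ℝ, (∀ s', 0 ≤ p' s') ∧ (∑ s' : S, p' s') = 1 ∧
          (∑ s' : S, |p' s' - phat s a hh s'|) ≤ φ s a hh ∧
          x = r s a hh + ∑ s' : S, p' s' * V s'}) := by
      refine ⟨B, ?_⟩
      rintro y ⟨a, rfl⟩
      exact hSup_le a
    set a0 : A := π s hh with ha0
    have hx0mem : (r s a0 hh + ∑ s' : S, p s a0 hh s' * V s') ∈
        {x : ℝ | ∃ p' : S → ℝ, (∀ s', 0 ≤ p' s') ∧ (∑ s' : S, p' s') = 1 ∧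
          (∑ s' : S, |p' s' - phat s a0 hh s'|) ≤ φ s a0 hh ∧
          x = r s a0 hh + ∑ s' : S, p' s' * V s'} :=
      ⟨p s a0 hh, hp0 s a0 hh, hp1 s a0 hh, hclose s a0 hh, rfl⟩
    have step1 : r s a0 hh + ∑ s' : S, p s a0 hh s' * valAux p r π n (hh + 1) s'
        ≤ r s a0 hh + ∑ s' : S, p s a0 hh s' * V s' :=
      add_le_add_right (Finset.sum_le_sum fun i _ =>
        mul_le_mul_of_nonneg_left (ih (hh + 1) i) (hp0 s a0 hh i)) _
    refine step1.trans ?_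
    have step2 : (r s a0 hh + ∑ s' : S, p s a0 hh s' * V s') ≤
        sSup {x : ℝ | ∃ p' : S → ℝ, (∀ s', 0 ≤ p' s') ∧ (∑ s' : S, p' s') = 1 ∧
          (∑ s' : S, |p' s' - phat s a0 hh s'|) ≤ φ s a0 hh ∧
          x = r s a0 hh + ∑ s' : S, p' s' * V s'} :=
      le_csSup ⟨B, fun y hy => hmem_le a0 y hy⟩ hx0mem
    exact le_ciSup_of_le hbdd a0 step2
end

section
/- The PMC-GD pseudo-reward is an upper bound: for any round with empirical means p̂, the pseudo-reward r̄(π;p̃) = r(π;p̂) + ∑_{u∈π} ‖p̃(u,·) − p̂(u,·)‖₁ satisfies r̄(π;p) ≥ r(π;p) for every action π ⊆ U and parameter p, where r(π;p) = ∑_{v∈V}(1 − ∏_{u∈π}(1 − p(u,v))). -/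
/-! For each target `v`, the reward gap `r(π;p) - r(π;p̂)` is a difference of two products of
factors in `[0,1]`. Replacing the factors one at a time changes such a product by at most the
change in that factor, so the gap at `v` is at most `∑_{u∈π} |p(u,v) - p̂(u,v)|`; summing over `v`
gives the bound. -/

open Finset

theorem norm_prod_sub_prod_le_sum_norm_sub {ι R : Type*} [NormedCommRing R] [NormOneClass R]
    (s : Finset ι) {a b : ι → R} (ha : ∀ i ∈ s, ‖a i‖ ≤ 1) (hb : ∀ i ∈ s, ‖b i‖ ≤ 1) :
    ‖∏ i ∈ s, a i - ∏ i ∈ s, b i‖ ≤ ∑ i ∈ s, ‖a i - b i‖ := by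
  induction s using Finset.cons_induction with
  | empty => simp
  | cons j s hj ih =>
    obtain ⟨-, ha⟩ := (forall_mem_cons hj _).1 ha
    obtain ⟨hbj, hb⟩ := (forall_mem_cons hj _).1 hb
    have hA : ‖∏ i ∈ s, a i‖ ≤ 1 :=
      (Finset.norm_prod_le s a).trans (prod_le_one (fun _ _ => norm_nonneg _) ha)
    rw [prod_cons, prod_cons, sum_cons,
      show a j * ∏ i ∈ s, a i - b j * ∏ i ∈ s, b i
        = (a j - b j) * ∏ i ∈ s, a i + b j * (∏ i ∈ s, a i - ∏ i ∈ s, b i) by ring]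
    calc ‖(a j - b j) * ∏ i ∈ s, a i + b j * (∏ i ∈ s, a i - ∏ i ∈ s, b i)‖
        ≤ ‖a j - b j‖ * ‖∏ i ∈ s, a i‖ + ‖b j‖ * ‖∏ i ∈ s, a i - ∏ i ∈ s, b i‖ :=
          (norm_add_le _ _).trans (add_le_add (norm_mul_le _ _) (norm_mul_le _ _))
      _ ≤ ‖a j - b j‖ * 1 + 1 * ∑ i ∈ s, ‖a i - b i‖ := by
          gcongr
          exact ih ha hb
      _ = ‖a j - b j‖ + ∑ i ∈ s, ‖a i - b i‖ := by ring

theorem abs_one_sub_le_one {x : ℝ} (hx : x ∈ Set.Icc (0 : ℝ) 1) : |1 - x| ≤ 1 :=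
  abs_le.2 ⟨by linarith [hx.2], by linarith [hx.1]⟩

theorem pmc_pseudo_reward_upper_bound {U V : Type*} [Fintype U] [Fintype V]
    (p phat : U → V → ℝ)
    (hp : ∀ u v, p u v ∈ Set.Icc (0:ℝ) 1)
    (hphat : ∀ u v, phat u v ∈ Set.Icc (0:ℝ) 1)
    (π : Finset U) :
    (∑ v : V, (1 - ∏ u ∈ π, (1 - p u v))) ≤
      (∑ v : V, (1 - ∏ u ∈ π, (1 - phat u v))) +
        ∑ u ∈ π, ∑ v : V, |p u v - phat u v| := by
  rw [sum_comm, ← sum_add_distrib]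
  refine sum_le_sum fun v _ => ?_
  have hprod := norm_prod_sub_prod_le_sum_norm_sub π (a := fun u => 1 - phat u v)
    (b := fun u => 1 - p u v) (fun u _ => abs_one_sub_le_one (hphat u v))
    (fun u _ => abs_one_sub_le_one (hp u v))
  simp only [Real.norm_eq_abs, sub_sub_sub_cancel_left] at hprod
  linarith [le_abs_self (∏ u ∈ π, (1 - phat u v) - ∏ u ∈ π, (1 - p u v))]
end
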